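/- Let M_X = V·T·V⁻¹ where V and T are N×N real matrices and V is invertible. Let Mᵉ be an N×N real matrix and let μ ∈ ℂ be an eigenvalue of Mᵉ which is not an eigenvalue of M_X. Then the complex matrix μI_N − T is invertible and ‖(μI_N − T)⁻¹‖⁻¹ ≤ cond(V)·‖M_X − Mᵉ‖; equivalently, 1 ≤ ‖(μI_N − T)⁻¹‖ · cond(V) · ‖M_X − Mᵉ‖. -/

import Mathlib

/-!
Bauer–Fike argument. If `μ` is in the resolvent set of `a` and in the spectrum of `b`, then
`μ - b = (μ - a) (1 - (μ - a)⁻¹ (b - a))`; were `‖(μ - a)⁻¹‖ ‖a - b‖ < 1`, the second factor would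
be invertible by the Neumann series, hence so would `μ - b`. Apply this with `a = M_X` and
`b = Mᵉ`, complexified; conjugating by `V` preserves the spectrum and multiplies the norm of the
resolvent by at most `cond(V)`, and complexification does not increase the operator norm.
-/

open Matrix
open scoped Matrix.Norms.L2Operator

/-- The multiset of complex eigenvalues (roots of the characteristic polynomial over `ℂ`)
of a real square matrix. -/
noncomputable def specC {n : ℕ} (A : Matrix (Fin n) (Fin n) ℝ) : Multiset ℂ :=
  ((A.map (algebraMap ℝ ℂ)).charpoly).roots

section Resolvent

variable {𝕜 A : Type*} [CommSemiring 𝕜]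

theorem resolvent_units_conjugate [Ring A] [Algebra 𝕜 A] (a : A) (u : Aˣ) (r : 𝕜) :
    resolvent (u * a * ↑u⁻¹) r = u * resolvent a r * ↑u⁻¹ := by
  have hconj : algebraMap 𝕜 A r - u * a * ↑u⁻¹ = u * (algebraMap 𝕜 A r - a) * ↑u⁻¹ := by
    simp [mul_sub, sub_mul, Algebra.commutes, mul_assoc]
  rw [resolvent, hconj, Ring.inverse_mul (.inr u⁻¹.isUnit), Ring.inverse_mul (.inl u.isUnit),
    Ring.inverse_unit, Ring.inverse_unit, inv_inv, resolvent, mul_assoc]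

variable [NormedRing A] [Algebra 𝕜 A]

theorem norm_resolvent_units_conjugate_le (a : A) (u : Aˣ) (r : 𝕜) :
    ‖resolvent (u * a * ↑u⁻¹) r‖ ≤ ‖(u : A)‖ * ‖resolvent a r‖ * ‖(↑u⁻¹ : A)‖ := by
  rw [resolvent_units_conjugate]
  exact (norm_mul_le _ _).trans (mul_le_mul_of_nonneg_right (norm_mul_le _ _) (norm_nonneg _))

theorem one_le_norm_resolvent_mul_norm_sub [HasSummableGeomSeries A] {a b : A} {r : 𝕜}
    (ha : r ∈ resolventSet 𝕜 a) (hb : r ∈ spectrum 𝕜 b) : 1 ≤ ‖resolvent a r‖ * ‖a - b‖ := by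
  obtain ⟨u, hu⟩ := spectrum.mem_resolventSet_iff.mp ha
  have hres : resolvent a r = ↑u⁻¹ := by rw [resolvent, ← hu, Ring.inverse_unit]
  by_contra! hlt
  have hsmall : ‖(↑u⁻¹ : A) * (b - a)‖ < 1 :=
    calc ‖(↑u⁻¹ : A) * (b - a)‖ ≤ ‖resolvent a r‖ * ‖a - b‖ := by
          rw [hres, norm_sub_rev a b]; exact norm_mul_le _ _
      _ < 1 := hlt
  have hfactor : algebraMap 𝕜 A r - b = u * (1 - ↑u⁻¹ * (b - a)) := by
    rw [mul_sub, mul_one, ← mul_assoc, Units.mul_inv, one_mul, hu]; abel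
  exact hb (spectrum.mem_resolventSet_iff.mpr
    (hfactor ▸ u.isUnit.mul (isUnit_one_sub_of_norm_lt_one hsmall)))

theorem one_le_norm_resolvent_mul_cond_mul_norm_sub [HasSummableGeomSeries A] {a b : A} {r : 𝕜}
    (u : Aˣ) (ha : r ∈ resolventSet 𝕜 a) (hb : r ∈ spectrum 𝕜 b) :
    1 ≤ ‖resolvent a r‖ * ((‖(u : A)‖ * ‖(↑u⁻¹ : A)‖) * ‖u * a * ↑u⁻¹ - b‖) := by
  have ha' : r ∈ resolventSet 𝕜 (u * a * ↑u⁻¹) := by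
    rwa [spectrum.mem_resolventSet_iff, ← spectrum.notMem_iff, spectrum.units_conjugate,
      spectrum.notMem_iff, ← spectrum.mem_resolventSet_iff]
  calc 1 ≤ ‖resolvent (u * a * ↑u⁻¹) r‖ * ‖u * a * ↑u⁻¹ - b‖ :=
        one_le_norm_resolvent_mul_norm_sub ha' hb
    _ ≤ ‖(u : A)‖ * ‖resolvent a r‖ * ‖(↑u⁻¹ : A)‖ * ‖u * a * ↑u⁻¹ - b‖ := by
        gcongr
        exact norm_resolvent_units_conjugate_le a u r
    _ = ‖resolvent a r‖ * ((‖(u : A)‖ * ‖(↑u⁻¹ : A)‖) * ‖u * a * ↑u⁻¹ - b‖) := by ring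

end Resolvent

theorem EuclideanSpace.norm_sq_eq_norm_sq_re_add_norm_sq_im {n : Type*} [Fintype n]
    (x : EuclideanSpace ℂ n) :
    ‖x‖ ^ 2 =
      ‖WithLp.toLp 2 (fun i => (x i).re)‖ ^ 2 + ‖WithLp.toLp 2 (fun i => (x i).im)‖ ^ 2 := by
  rw [EuclideanSpace.norm_sq_eq, EuclideanSpace.norm_sq_eq, EuclideanSpace.norm_sq_eq,
    ← Finset.sum_add_distrib]
  refine Finset.sum_congr rfl fun i _ => ?_
  rw [Complex.sq_norm, Complex.normSq_apply]
  simp [sq]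

theorem Matrix.l2_opNorm_map_ofReal_le {m n : Type*} [Fintype m] [Fintype n] [DecidableEq n]
    (M : Matrix m n ℝ) : ‖M.map (algebraMap ℝ ℂ)‖ ≤ ‖M‖ := by
  refine ContinuousLinearMap.opNorm_le_bound _ (norm_nonneg M) fun x => ?_
  set y : EuclideanSpace ℂ m := WithLp.toLp 2 (M.map (algebraMap ℝ ℂ) *ᵥ x)
  set xre : EuclideanSpace ℝ n := WithLp.toLp 2 fun j => (x j).re
  set xim : EuclideanSpace ℝ n := WithLp.toLp 2 fun j => (x j).im
  have hre : (fun i => (y i).re) = M *ᵥ xre := by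
    ext i; simp [y, xre, mulVec, dotProduct, Complex.re_sum]
  have him : (fun i => (y i).im) = M *ᵥ xim := by
    ext i; simp [y, xim, mulVec, dotProduct, Complex.im_sum]
  show ‖y‖ ≤ ‖M‖ * ‖x‖
  refine le_of_pow_le_pow_left₀ two_ne_zero (by positivity) ?_
  calc ‖y‖ ^ 2 = ‖WithLp.toLp 2 (M *ᵥ xre)‖ ^ 2 + ‖WithLp.toLp 2 (M *ᵥ xim)‖ ^ 2 := by
        rw [EuclideanSpace.norm_sq_eq_norm_sq_re_add_norm_sq_im y, hre, him]
    _ ≤ (‖M‖ * ‖xre‖) ^ 2 + (‖M‖ * ‖xim‖) ^ 2 := by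
        gcongr <;> exact M.l2_opNorm_mulVec _
    _ = (‖M‖ * ‖x‖) ^ 2 := by
        rw [mul_pow, mul_pow, mul_pow, EuclideanSpace.norm_sq_eq_norm_sq_re_add_norm_sq_im x]; ring

theorem mem_specC_iff {n : ℕ} (A : Matrix (Fin n) (Fin n) ℝ) (μ : ℂ) :
    μ ∈ specC A ↔ μ ∈ spectrum ℂ (A.map (algebraMap ℝ ℂ)) := by
  rw [specC, Polynomial.mem_roots (charpoly_monic _).ne_zero, mem_spectrum_iff_isRoot_charpoly]

/-- if `M_X = V·T·V⁻¹` and `μ` is an eigenvalue of `Mᵉ` that is not an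
eigenvalue of `M_X`, then `μI − T` (as a complex matrix) is invertible and
`‖(μI − T)⁻¹‖⁻¹ ≤ cond(V)·‖M_X − Mᵉ‖`; equivalently
`1 ≤ ‖(μI − T)⁻¹‖·cond(V)·‖M_X − Mᵉ‖`. -/
theorem stmt8 {N : ℕ} (MX V T Mε : Matrix (Fin N) (Fin N) ℝ)
    (hV : IsUnit V) (hfact : MX = V * T * V⁻¹)
    (μ : ℂ) (hμ : μ ∈ specC Mε) (hμnot : μ ∉ specC MX) :
    IsUnit (μ • (1 : Matrix (Fin N) (Fin N) ℂ) - T.map (algebraMap ℝ ℂ)) ∧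
    ‖(μ • (1 : Matrix (Fin N) (Fin N) ℂ) - T.map (algebraMap ℝ ℂ))⁻¹‖⁻¹ ≤
      (‖V‖ * ‖V⁻¹‖) * ‖MX - Mε‖ ∧
    1 ≤ ‖(μ • (1 : Matrix (Fin N) (Fin N) ℂ) - T.map (algebraMap ℝ ℂ))⁻¹‖ *
      ((‖V‖ * ‖V⁻¹‖) * ‖MX - Mε‖) := by
  obtain ⟨u, rfl⟩ := hV
  set f := algebraMap ℝ ℂ
  set uc := Units.map f.mapMatrix.toMonoidHom u
  have hMX : MX.map f = uc.val * T.map f * (uc⁻¹).val := by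
    rw [hfact, Units.coe_map_inv, ← coe_units_inv]
    simp [uc, Matrix.map_mul]
  have hres : μ ∈ resolventSet ℂ (T.map f) := by
    rwa [mem_specC_iff, hMX, spectrum.units_conjugate, spectrum.notMem_iff,
      ← spectrum.mem_resolventSet_iff] at hμnot
  have key : 1 ≤ ‖resolvent (T.map f) μ‖ * ((‖u.val‖ * ‖u.val⁻¹‖) * ‖MX - Mε‖) := by
    refine (one_le_norm_resolvent_mul_cond_mul_norm_sub uc hres
      ((mem_specC_iff _ _).mp hμ)).trans ?_
    rw [← hMX, ← Matrix.map_sub _ (map_sub f), Units.coe_map_inv, ← coe_units_inv]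
    gcongr <;> exact l2_opNorm_map_ofReal_le _
  have hW : (μ • (1 : Matrix (Fin N) (Fin N) ℂ) - T.map f)⁻¹ = resolvent (T.map f) μ := by
    rw [nonsing_inv_eq_ringInverse, resolvent, Algebra.algebraMap_eq_smul_one]
  have hres_pos : 0 < ‖resolvent (T.map f) μ‖ :=
    pos_of_mul_pos_left (one_pos.trans_le key) (by positivity)
  rw [hW]
  refine ⟨?_, (inv_le_iff_one_le_mul₀' hres_pos).mpr key, key⟩
  rwa [spectrum.mem_resolventSet_iff, Algebra.algebraMap_eq_smul_one] at hres
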